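/- Combining the previous two facts: let σ₀,…,σ_n be nonnegative random variables adapted to a filtration with P(σᵢ < 2T/n | F_{i−1}) ≤ q a.s. for each i, where q ∈ (0,1) and n = 2k is even. Then P(σ₀ + ⋯ + σ_n ≤ T) ≤ C(n, k) · q^k ≤ (2√q)^n. -/

import Mathlib

/-!
On the event `σ₀ + ⋯ + σ_n ≤ T`, at most half of the `n` nonnegative summands `σ₀, …, σ_{n-1}`
can be at least `2T/n`, so some `k`-set `S` of indices below `n = 2k` has `σᵢ < 2T/n` for all
`i ∈ S`. For the largest `i ∈ S` the other events are `ℱ i`-measurable, so conditioning on `ℱ i`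
costs a factor `q`; by induction the probability of this event is at most `q ^ k`, and a union
bound over the `C(n, k) ≤ 2 ^ n` sets `S` finishes.
-/

open MeasureTheory Finset

lemma measureReal_inter_le_mul_of_condExp_indicator_le {Ω : Type*} {m m0 : MeasurableSpace Ω}
    (hm : m ≤ m0) {μ : Measure Ω} [IsFiniteMeasure μ] {A B : Set Ω} (hA : MeasurableSet A)
    (hB : MeasurableSet[m] B) {q : ℝ}
    (hcond : ∀ᵐ ω ∂μ, μ[A.indicator (fun _ => (1 : ℝ)) | m] ω ≤ q) :
    μ.real (A ∩ B) ≤ q * μ.real B :=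
  calc μ.real (A ∩ B) = ∫ ω in B, A.indicator (fun _ => (1 : ℝ)) ω ∂μ := by
        rw [integral_indicator_const _ hA, measureReal_restrict_apply hA, smul_eq_mul, mul_one]
    _ = ∫ ω in B, μ[A.indicator (fun _ => (1 : ℝ)) | m] ω ∂μ :=
        (setIntegral_condExp hm ((integrable_const 1).indicator hA) hB).symm
    _ ≤ ∫ _ in B, q ∂μ :=
        integral_mono_ae integrable_condExp.restrict (integrable_const q) (ae_restrict_of_ae hcond)
    _ = q * μ.real B := by rw [setIntegral_const, smul_eq_mul, mul_comm]

lemma measureReal_biInter_le_pow {Ω : Type*} {m0 : MeasurableSpace Ω} {μ : Measure Ω}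
    [IsProbabilityMeasure μ] {ℱ : ℕ → MeasurableSpace Ω} (hℱ : Monotone ℱ)
    (hℱle : ∀ i, ℱ i ≤ m0) {A : ℕ → Set Ω} (hA : ∀ i, MeasurableSet[ℱ (i + 1)] (A i))
    {q : ℝ} (hq : 0 ≤ q) (S : Finset ℕ)
    (hcond : ∀ i ∈ S, ∀ᵐ ω ∂μ, μ[(A i).indicator (fun _ => (1 : ℝ)) | ℱ i] ω ≤ q) :
    μ.real (⋂ i ∈ S, A i) ≤ q ^ #S := by
  induction S using Finset.induction_on_max with
  | empty => simp
  | insert a S hlt ih =>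
    have hBa : MeasurableSet[ℱ a] (⋂ i ∈ S, A i) :=
      Finset.measurableSet_biInter S fun i hi => hℱ (hlt i hi) _ (hA i)
    have hstep := measureReal_inter_le_mul_of_condExp_indicator_le (hℱle a)
      (hℱle (a + 1) _ (hA a)) hBa (hcond a (mem_insert_self a S))
    have hIH := ih fun i hi => hcond i (mem_insert_of_mem hi)
    rw [set_biInter_insert, card_insert_of_notMem fun ha => (hlt a ha).false, pow_succ']
    exact hstep.trans (mul_le_mul_of_nonneg_left hIH hq)

lemma card_le_two_mul_card_filter_lt_of_sum_le {ι : Type*} {s : Finset ι} {x : ι → ℝ}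
    (hx : ∀ i ∈ s, 0 ≤ x i) {T : ℝ} (hT : 0 < T) (hsum : ∑ i ∈ s, x i ≤ T) :
    #s ≤ 2 * #{i ∈ s | x i < 2 * T / #s} := by
  rcases s.eq_empty_or_nonempty with rfl | hs
  · simp
  have hcard := card_filter_add_card_filter_not (s := s) fun i => x i < 2 * T / #s
  set G := {i ∈ s | ¬x i < 2 * T / #s}
  have hG : (#G : ℝ) * (2 * T / #s) ≤ T :=
    calc (#G : ℝ) * (2 * T / #s) ≤ ∑ i ∈ G, x i := by
          rw [← nsmul_eq_mul]
          exact card_nsmul_le_sum _ _ _ fun i hi => not_lt.1 (mem_filter.1 hi).2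
      _ ≤ ∑ i ∈ s, x i :=
          sum_le_sum_of_subset_of_nonneg (filter_subset _ _) fun i hi _ => hx i hi
      _ ≤ T := hsum
  have hs0 : (0 : ℝ) < #s := by exact_mod_cast hs.card_pos
  have h2G : (2 * #G : ℝ) ≤ #s := by
    rw [mul_div_assoc', div_le_iff₀ hs0] at hG
    nlinarith
  have : 2 * #G ≤ #s := by exact_mod_cast h2G
  omega

lemma measureReal_biUnion_powersetCard_le {Ω ι : Type*} {m0 : MeasurableSpace Ω}
    {μ : Measure Ω} [IsFiniteMeasure μ] (A : Finset ι → Set Ω) (s : Finset ι) (k : ℕ) {p : ℝ}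
    (h : ∀ t ∈ s.powersetCard k, μ.real (A t) ≤ p) :
    μ.real (⋃ t ∈ s.powersetCard k, A t) ≤ (#s).choose k * p :=
  (measureReal_biUnion_finset_le _ _).trans <| (sum_le_card_nsmul _ _ _ h).trans_eq <| by
    rw [card_powersetCard, nsmul_eq_mul]

lemma central_choose_mul_pow_le (k : ℕ) {q : ℝ} (hq : 0 ≤ q) :
    ((2 * k).choose k : ℝ) * q ^ k ≤ (2 * Real.sqrt q) ^ (2 * k) :=
  calc ((2 * k).choose k : ℝ) * q ^ k ≤ 2 ^ (2 * k) * q ^ k := by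
        gcongr; exact_mod_cast Nat.choose_le_two_pow _ _
    _ = (2 * Real.sqrt q) ^ (2 * k) := by rw [mul_pow, pow_mul (Real.sqrt q), Real.sq_sqrt hq, pow_mul]

theorem small_sum_probability_bound_general
    {Ω : Type*} {m0 : MeasurableSpace Ω} (μ : Measure Ω) [IsProbabilityMeasure μ]
    (k : ℕ) (n : ℕ) (hn : n = 2 * k)
    (σ : ℕ → Ω → ℝ) (hσpos : ∀ i ω, 0 ≤ σ i ω)
    (ℱ : ℕ → MeasurableSpace Ω) (hℱ : Monotone ℱ) (hℱle : ∀ i, ℱ i ≤ m0)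
    (hadapt : ∀ i, @Measurable Ω ℝ (ℱ (i + 1)) _ (σ i))
    (T q : ℝ) (hT : 0 < T) (hq : q ∈ Set.Ioo (0 : ℝ) 1)
    (hcond : ∀ i ≤ n,
      ∀ᵐ ω ∂μ,
        (μ[Set.indicator {ω' | σ i ω' < 2 * T / n} (fun _ => (1 : ℝ)) | ℱ i]) ω ≤ q) :
    μ {ω | ∑ i ∈ Finset.range (n + 1), σ i ω ≤ T} ≤
        ENNReal.ofReal ((n.choose k : ℝ) * q ^ k) ∧
      (n.choose k : ℝ) * q ^ k ≤ (2 * Real.sqrt q) ^ n := by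
  set A : ℕ → Set Ω := fun i => {ω | σ i ω < 2 * T / n}
  have hsub : {ω | ∑ i ∈ range (n + 1), σ i ω ≤ T} ⊆
      ⋃ S ∈ (range n).powersetCard k, ⋂ i ∈ S, A i := by
    intro ω hω
    have hsum : ∑ i ∈ range n, σ i ω ≤ T := le_trans (sum_le_sum_of_subset_of_nonneg
      (range_subset_range.2 n.le_succ) fun i _ _ => hσpos i ω) hω
    have hcard := card_le_two_mul_card_filter_lt_of_sum_le (fun i _ => hσpos i ω) hT hsum
    rw [card_range] at hcard
    obtain ⟨S, hS, rfl⟩ :=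
      exists_subset_card_eq (show k ≤ #{i ∈ range n | σ i ω < 2 * T / n} by omega)
    exact Set.mem_biUnion (mem_powersetCard.2 ⟨hS.trans (filter_subset _ _), rfl⟩)
      (Set.mem_iInter₂.2 fun i hi => (mem_filter.1 (hS hi)).2)
  have hbound : μ.real {ω | ∑ i ∈ range (n + 1), σ i ω ≤ T} ≤ n.choose k * q ^ k := by
    refine (measureReal_mono hsub (measure_ne_top _ _)).trans ?_
    simpa using measureReal_biUnion_powersetCard_le _ (range n) k fun S hS =>
      (mem_powersetCard.1 hS).2 ▸ measureReal_biInter_le_pow hℱ hℱle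
        (fun i => hadapt i measurableSet_Iio) hq.1.le S fun i hi =>
          hcond i (mem_range.1 ((mem_powersetCard.1 hS).1 hi)).le
  refine ⟨?_, hn ▸ central_choose_mul_pow_le k hq.1.le⟩
  rw [← ofReal_measureReal]
  exact ENNReal.ofReal_le_ofReal hbound

theorem small_sum_probability_bound
    {Ω : Type*} {m0 : MeasurableSpace Ω} (μ : Measure Ω) [IsProbabilityMeasure μ]
    (k : ℕ) (n : ℕ) (hn : n = 2 * k) (hk : 0 < k)
    (σ : ℕ → Ω → ℝ) (hσpos : ∀ i ω, 0 ≤ σ i ω)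
    (ℱ : ℕ → MeasurableSpace Ω) (hℱ : Monotone ℱ) (hℱle : ∀ i, ℱ i ≤ m0)
    (hadapt : ∀ i, @Measurable Ω ℝ (ℱ (i + 1)) _ (σ i))
    (T q : ℝ) (hT : 0 < T) (hq : q ∈ Set.Ioo (0 : ℝ) 1)
    (hcond : ∀ i ≤ n,
      ∀ᵐ ω ∂μ,
        (μ[Set.indicator {ω' | σ i ω' < 2 * T / n} (fun _ => (1 : ℝ)) | ℱ i]) ω ≤ q) :
    μ {ω | ∑ i ∈ Finset.range (n + 1), σ i ω ≤ T} ≤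
        ENNReal.ofReal ((n.choose k : ℝ) * q ^ k) ∧
      (n.choose k : ℝ) * q ^ k ≤ (2 * Real.sqrt q) ^ n :=
  small_sum_probability_bound_general μ k n hn σ hσpos ℱ hℱ hℱle hadapt T q hT hq hcond
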